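/- Let ν, ν₁, …, ν_d ∈ ℝ² and a₁ < ⋯ < a_{d−1} be real numbers. For (H,r) with r > 0, set H_i = H + a_i, ρ_i = √(r² + H_i²), f(H,r) = ν₁ + ½ Σ_{i=1}^{d−1} (1 − H_i/ρ_i)(ν_{i+1} − ν_i), and g(H,r) = ν + Σ_{i=1}^{d−1} (ν_{i+1} − ν_i)/(2ρ_i). Then the partial derivatives satisfy ∂f/∂r = −r ∂g/∂H and ∂f/∂H = r ∂g/∂r at every point with r > 0. -/

import Mathlib

/-!
Every summand of `f` and `g` is a function of `(H + aᵢ, r)` alone, multiplied by the constant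
vector `νᵢ₊₁ - νᵢ`, so both identities reduce to one pair of scalar coefficients
`φ(h, r) = (1 - h/ρ)/2` and `ψ(h, r) = 1/(2ρ)` with `ρ = √(r² + h²)`. Their partial derivatives are
`∂φ/∂r = hr/(2ρ³)`, `∂φ/∂h = -r²/(2ρ³)`, `∂ψ/∂r = -r/(2ρ³)`, `∂ψ/∂h = -h/(2ρ³)`, which satisfy
`∂φ/∂r = -r ∂ψ/∂h` and `∂φ/∂h = r ∂ψ/∂r`.
-/

open Real Finset

theorem HasDerivAt.sum_smul_const {E ι : Type*} [NormedAddCommGroup E] [NormedSpace ℝ E]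
    (s : Finset ι) (v : ι → E) {c : ι → ℝ → ℝ} {c' : ι → ℝ} {x : ℝ}
    (hc : ∀ i ∈ s, HasDerivAt (c i) (c' i) x) :
    HasDerivAt (fun y => ∑ i ∈ s, c i y • v i) (∑ i ∈ s, c' i • v i) x :=
  HasDerivAt.fun_sum fun i hi => (hc i hi).smul_const (v i)

theorem hasDerivAt_sqrt_sq_add (c x : ℝ) (hx : x ^ 2 + c ≠ 0) :
    HasDerivAt (fun y => √(y ^ 2 + c)) (x / √(x ^ 2 + c)) x := by
  convert ((hasDerivAt_pow 2 x).add_const c).sqrt hx using 1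
  ring

theorem hasDerivAt_sqrt_add_sq (c x : ℝ) (hx : c + x ^ 2 ≠ 0) :
    HasDerivAt (fun y => √(c + y ^ 2)) (x / √(c + x ^ 2)) x := by
  simpa only [add_comm c] using hasDerivAt_sqrt_sq_add c x (by rwa [add_comm])

section Coefficients

variable {h r : ℝ}

theorem hasDerivAt_one_sub_div_sqrt_radius (hρ : 0 < r ^ 2 + h ^ 2) :
    HasDerivAt (fun r' => 1 - h / √(r' ^ 2 + h ^ 2)) (h * r / √(r ^ 2 + h ^ 2) ^ 3) r := by
  have hsqrt : √(r ^ 2 + h ^ 2) ≠ 0 := (sqrt_pos.2 hρ).ne'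
  refine ((hasDerivAt_const r h).fun_div (hasDerivAt_sqrt_sq_add _ r hρ.ne') hsqrt).const_sub 1
    |>.congr_deriv ?_
  field_simp
  ring

theorem hasDerivAt_one_sub_div_sqrt_height (hρ : 0 < r ^ 2 + h ^ 2) :
    HasDerivAt (fun h' => 1 - h' / √(r ^ 2 + h' ^ 2)) (-r ^ 2 / √(r ^ 2 + h ^ 2) ^ 3) h := by
  have hsqrt : √(r ^ 2 + h ^ 2) ≠ 0 := (sqrt_pos.2 hρ).ne'
  have hsq : √(r ^ 2 + h ^ 2) ^ 2 = r ^ 2 + h ^ 2 := sq_sqrt hρ.le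
  refine ((hasDerivAt_id' h).fun_div (hasDerivAt_sqrt_add_sq _ h hρ.ne') hsqrt).const_sub 1
    |>.congr_deriv ?_
  field_simp
  linear_combination -hsq

theorem hasDerivAt_inv_two_sqrt_radius (hρ : 0 < r ^ 2 + h ^ 2) :
    HasDerivAt (fun r' => 1 / (2 * √(r' ^ 2 + h ^ 2))) (-r / (2 * √(r ^ 2 + h ^ 2) ^ 3)) r := by
  have hsqrt : √(r ^ 2 + h ^ 2) ≠ 0 := (sqrt_pos.2 hρ).ne'
  refine (hasDerivAt_const r (1 : ℝ)).fun_div ((hasDerivAt_sqrt_sq_add _ r hρ.ne').const_mul 2)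
    (mul_ne_zero two_ne_zero hsqrt) |>.congr_deriv ?_
  field_simp
  ring

theorem hasDerivAt_inv_two_sqrt_height (hρ : 0 < r ^ 2 + h ^ 2) :
    HasDerivAt (fun h' => 1 / (2 * √(r ^ 2 + h' ^ 2))) (-h / (2 * √(r ^ 2 + h ^ 2) ^ 3)) h := by
  have hsqrt : √(r ^ 2 + h ^ 2) ≠ 0 := (sqrt_pos.2 hρ).ne'
  refine (hasDerivAt_const h (1 : ℝ)).fun_div ((hasDerivAt_sqrt_add_sq _ h hρ.ne').const_mul 2)
    (mul_ne_zero two_ne_zero hsqrt) |>.congr_deriv ?_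
  field_simp
  ring

end Coefficients

theorem stmt_5_general (n : ℕ) (ν : ℝ × ℝ) (νs : Fin (n + 1) → ℝ × ℝ)
    (a : Fin n → ℝ)
    (f g : ℝ → ℝ → ℝ × ℝ)
    (hf : f = fun H r => νs 0 + (1 / 2 : ℝ) •
      ∑ i : Fin n, (1 - (H + a i) / Real.sqrt (r ^ 2 + (H + a i) ^ 2)) •
        (νs i.succ - νs i.castSucc))
    (hg : g = fun H r => ν +
      ∑ i : Fin n, (1 / (2 * Real.sqrt (r ^ 2 + (H + a i) ^ 2))) •
        (νs i.succ - νs i.castSucc)) :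
    ∀ H : ℝ, ∀ r : ℝ, 0 < r →
      deriv (fun r' => f H r') r = (-r) • deriv (fun H' => g H' r) H ∧
      deriv (fun H' => f H' r) H = r • deriv (fun r' => g H r') r := by
  subst hf hg
  intro H r hr
  have hρ (i : Fin n) : 0 < r ^ 2 + (H + a i) ^ 2 := by positivity
  have hfr := ((HasDerivAt.sum_smul_const univ (fun i => νs i.succ - νs i.castSucc)
    fun i _ => hasDerivAt_one_sub_div_sqrt_radius (hρ i)).fun_const_smul (1 / 2 : ℝ)).const_add
      (νs 0)
  have hfH := ((HasDerivAt.sum_smul_const univ (fun i => νs i.succ - νs i.castSucc)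
    fun i _ => (hasDerivAt_one_sub_div_sqrt_height (hρ i)).comp_add_const H (a i)).fun_const_smul
      (1 / 2 : ℝ)).const_add (νs 0)
  have hgr := (HasDerivAt.sum_smul_const univ (fun i => νs i.succ - νs i.castSucc)
    fun i _ => hasDerivAt_inv_two_sqrt_radius (hρ i)).const_add ν
  have hgH := (HasDerivAt.sum_smul_const univ (fun i => νs i.succ - νs i.castSucc)
    fun i _ => (hasDerivAt_inv_two_sqrt_height (hρ i)).comp_add_const H (a i)).const_add ν
  beta_reduce at hfr hfH hgr hgH
  rw [hfr.deriv, hfH.deriv, hgr.deriv, hgH.deriv]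
  simp only [smul_sum, smul_smul]
  constructor <;> refine sum_congr rfl fun i _ => ?_ <;> congr 1 <;> ring

/-- The functions `f` and `g` of the Abreu–Sena-Dias construction satisfy
`∂f/∂r = −r ∂g/∂H` and `∂f/∂H = r ∂g/∂r` for `r > 0`. -/
theorem stmt_5 (n : ℕ) (ν : ℝ × ℝ) (νs : Fin (n + 1) → ℝ × ℝ)
    (a : Fin n → ℝ) (ha : StrictMono a)
    (f g : ℝ → ℝ → ℝ × ℝ)
    (hf : f = fun H r => νs 0 + (1 / 2 : ℝ) •
      ∑ i : Fin n, (1 - (H + a i) / Real.sqrt (r ^ 2 + (H + a i) ^ 2)) •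
        (νs i.succ - νs i.castSucc))
    (hg : g = fun H r => ν +
      ∑ i : Fin n, (1 / (2 * Real.sqrt (r ^ 2 + (H + a i) ^ 2))) •
        (νs i.succ - νs i.castSucc)) :
    ∀ H : ℝ, ∀ r : ℝ, 0 < r →
      deriv (fun r' => f H r') r = (-r) • deriv (fun H' => g H' r) H ∧
      deriv (fun H' => f H' r) H = r • deriv (fun r' => g H r') r :=
  stmt_5_general n ν νs a f g hf hg
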